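/- Let u, u₁, u₂, z be words over {a,b}, let w₁ = u·b·u₁ and w₂ = u·a·u₂. Then m(w̄₁·a·z·b·w₂) < m(w̄₁·b·z̄·a·w₂). -/

import Mathlib

def A : Matrix (Fin 2) (Fin 2) ℤ := !![1,1;1,2]
def B : Matrix (Fin 2) (Fin 2) ℤ := !![2,1;1,1]
/-- matrix of a word: `false` is the letter `a`, `true` is the letter `b` -/
def Mw (w : List Bool) : Matrix (Fin 2) (Fin 2) ℤ :=
  (w.map (fun x => if x then B else A)).prod
/-- the m-value: the top-right entry -/
def mval (w : List Bool) : ℤ := Mw w 0 1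
def U : Matrix (Fin 2) (Fin 2) ℤ := !![0,-1;1,0]
def J : Matrix (Fin 2) (Fin 2) ℤ := !![0,1;1,0]
/-- reversal with letters exchanged -/
def Ebar (w : List Bool) : List Bool := (w.map (fun x => !x)).reverse
def pell : ℕ → ℕ
  | 0 => 0
  | 1 => 1
  | n+2 => 2 * pell (n+1) + pell n

/-!
Write `L = M(w̄₁)` with the letter after it and `R = M(w₂)` with the letter before it removed,
i.e. `L = M(ū₁) B M(ū)` and `R = M(u) A M(u₂)`. The two words have matrices `L A Z B R` and
`L B Zᵀ A R`, where `Z = M(z)` and `M(z̄) = Zᵀ` because `A` and `B` are symmetric. Expanding,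
the difference of their top-right entries factors as `(Z₀₀ + Z₁₁ + 3 Z₁₀) (L₀₀ R₁₁ - L₀₁ R₀₁)`,
and since `det M(u) = 1` the second factor no longer involves `u`; it equals
`X₀₀ Y₀₁ + 3 X₀₀ Y₁₁ + X₁₀ Y₁₁` with `X = M(u₁)`, `Y = M(u₂)`. Both factors are positive since
every `M(w)` has nonnegative entries and diagonal entries at least `1`.
-/

open Matrix

@[simp] lemma Mw_nil : Mw [] = 1 := rfl

@[simp] lemma Mw_cons (x : Bool) (w : List Bool) :
    Mw (x :: w) = (if x then B else A) * Mw w := by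
  simp [Mw]

lemma Mw_a : Mw [false] = A := by simp [Mw]

lemma Mw_b : Mw [true] = B := by simp [Mw]

@[simp] lemma Mw_append (v w : List Bool) : Mw (v ++ w) = Mw v * Mw w := by
  simp [Mw]

lemma transpose_A : Aᵀ = A := by decide

lemma transpose_B : Bᵀ = B := by decide

lemma Mw_reverse (w : List Bool) : Mw w.reverse = (Mw w)ᵀ := by
  induction w with
  | nil => simp
  | cons x w ih =>
    rw [List.reverse_cons, Mw_append, ih, Mw_cons x w, transpose_mul]
    cases x <;> simp [transpose_A, transpose_B]

lemma det_Mw (w : List Bool) : (Mw w).det = 1 := by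
  induction w with
  | nil => simp
  | cons x w ih =>
    rw [Mw_cons, det_mul, ih, mul_one]
    cases x <;> simp [A, B, det_fin_two_of]

lemma Mw_entries_bounds (w : List Bool) :
    1 ≤ Mw w 0 0 ∧ 0 ≤ Mw w 0 1 ∧ 0 ≤ Mw w 1 0 ∧ 1 ≤ Mw w 1 1 := by
  induction w with
  | nil => simp [one_apply]
  | cons x w ih =>
    obtain ⟨h00, h01, h10, h11⟩ := ih
    rw [Mw_cons]
    cases x <;> refine ⟨?_, ?_, ?_, ?_⟩ <;>
      simp [A, B, mul_apply, Fin.sum_univ_two] <;> linarith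

lemma swap_middle_apply_sub (L Z R : Matrix (Fin 2) (Fin 2) ℤ) :
    (L * B * Zᵀ * A * R) 0 1 - (L * A * Z * B * R) 0 1 =
      (Z 0 0 + Z 1 1 + 3 * Z 1 0) * (L 0 0 * R 1 1 - L 0 1 * R 0 1) := by
  simp [mul_apply, Fin.sum_univ_two, A, B]
  ring

lemma outer_factor_eq (C X Y : Matrix (Fin 2) (Fin 2) ℤ) :
    (Xᵀ * B * Cᵀ) 0 0 * (C * A * Y) 1 1 - (Xᵀ * B * Cᵀ) 0 1 * (C * A * Y) 0 1 =
      C.det * (X 0 0 * Y 0 1 + 3 * (X 0 0 * Y 1 1) + X 1 0 * Y 1 1) := by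
  simp [mul_apply, Fin.sum_univ_two, A, B, det_fin_two]
  ring

lemma mval_swap_sub (u u₁ u₂ z : List Bool) :
    mval ((u ++ [true] ++ u₁).reverse ++ [true] ++ z.reverse ++ [false] ++ (u ++ [false] ++ u₂)) -
      mval ((u ++ [true] ++ u₁).reverse ++ [false] ++ z ++ [true] ++ (u ++ [false] ++ u₂)) =
    (Mw z 0 0 + Mw z 1 1 + 3 * Mw z 1 0) *
      (Mw u₁ 0 0 * Mw u₂ 0 1 + 3 * (Mw u₁ 0 0 * Mw u₂ 1 1) + Mw u₁ 1 0 * Mw u₂ 1 1) := by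
  set L := (Mw u₁)ᵀ * B * (Mw u)ᵀ
  set R := Mw u * A * Mw u₂
  have h_az : Mw ((u ++ [true] ++ u₁).reverse ++ [false] ++ z ++ [true] ++ (u ++ [false] ++ u₂)) =
      L * A * Mw z * B * R := by
    simp only [L, R, Mw_append, List.reverse_append, Mw_reverse, Mw_a, Mw_b,
      transpose_B, Matrix.mul_assoc]
  have h_bz : Mw ((u ++ [true] ++ u₁).reverse ++ [true] ++ z.reverse ++ [false] ++
      (u ++ [false] ++ u₂)) = L * B * (Mw z)ᵀ * A * R := by
    simp only [L, R, Mw_append, List.reverse_append, Mw_reverse, Mw_a, Mw_b,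
      transpose_B, Matrix.mul_assoc]
  rw [mval, mval, h_az, h_bz, swap_middle_apply_sub, outer_factor_eq, det_Mw, one_mul]

theorem stmt13 (u u₁ u₂ z : List Bool) :
    mval ((u ++ [true] ++ u₁).reverse ++ [false] ++ z ++ [true] ++ (u ++ [false] ++ u₂)) <
    mval ((u ++ [true] ++ u₁).reverse ++ [true] ++ z.reverse ++ [false] ++ (u ++ [false] ++ u₂)) := by
  obtain ⟨hz00, -, hz10, hz11⟩ := Mw_entries_bounds z
  obtain ⟨hx00, -, hx10, -⟩ := Mw_entries_bounds u₁
  obtain ⟨-, hy01, -, hy11⟩ := Mw_entries_bounds u₂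
  have hgap := mval_swap_sub u u₁ u₂ z
  have hZ : 0 < Mw z 0 0 + Mw z 1 1 + 3 * Mw z 1 0 := by linarith
  have hXY : 0 < Mw u₁ 0 0 * Mw u₂ 0 1 + 3 * (Mw u₁ 0 0 * Mw u₂ 1 1) + Mw u₁ 1 0 * Mw u₂ 1 1 := by
    positivity
  linarith [mul_pos hZ hXY]
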